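/- Let A = σ(R)⟨x_1,…,x_n⟩ be a skew PBW extension of a ring R with the elements c_{i,j} of condition (iv) central in R. If R is Σ-rigid, then R is skew Π-Armendariz with respect to A. -/

import Mathlib

open scoped BigOperators

/-- Iterated "power composition": given a family of maps `f i` and multiplicities `k i`,
`iterPow f k = (f 0)^[k 0] ∘ (f 1)^[k 1] ∘ ⋯ ∘ (f (n-1))^[k (n-1)]`.
For a family of endomorphisms `σ` this is `σ^α = σ₁^{α₁} ∘ ⋯ ∘ σₙ^{αₙ}`. -/
def iterPow {α : Type*} {n : ℕ} (f : Fin n → α → α) (k : Fin n → ℕ) : α → α :=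
  (((List.finRange n).map fun i => (f i)^[k i]).foldr (· ∘ ·) id)

/-- A skew PBW extension `A = σ(R)⟨x₁,…,xₙ⟩` of a ring `R`. -/
structure SkewPBW (R A : Type*) [Ring R] [Ring A] (n : ℕ) where
  /-- the inclusion `R ⊆ A` (a ring embedding) -/
  ι : R →+* A
  ι_inj : Function.Injective ι
  /-- the variables `x₁,…,xₙ` -/
  x : Fin n → A
  /-- `A` is a free left `R`-module with basis the standard monomials
  `x^α = x₁^{α₁} ⋯ xₙ^{αₙ}`: every element of `A` is a unique finite
  `R`-linear combination of standard monomials. -/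
  free : Function.Bijective
    (fun c : (Fin n → ℕ) →₀ R =>
      c.sum fun α r => ι r * (((List.finRange n).map fun i => x i ^ α i).prod))
  /-- condition (iii): for each `i` and each nonzero `r ∈ R` there is a nonzero
  `c_{i,r} ∈ R` with `xᵢ r − c_{i,r} xᵢ ∈ R` -/
  lin : ∀ (i : Fin n) (r : R), r ≠ 0 → ∃ cr : R, cr ≠ 0 ∧
    ∃ r' : R, x i * ι r - ι cr * x i = ι r'
  /-- the constants `c_{i,j}` of condition (iv) -/
  c : Fin n → Fin n → R
  c_ne : ∀ i j, c i j ≠ 0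
  /-- condition (iv): `xⱼ xᵢ − c_{i,j} xᵢ xⱼ ∈ R + R x₁ + ⋯ + R xₙ` -/
  quad : ∀ i j, ∃ (r₀ : R) (r : Fin n → R),
    x j * x i - ι (c i j) * (x i * x j) = ι r₀ + ∑ k, ι (r k) * x k
  /-- the injective endomorphisms `σᵢ` -/
  σ : Fin n → R →+* R
  σ_inj : ∀ i, Function.Injective (σ i)
  /-- the `σᵢ`-derivations `δᵢ` -/
  δ : Fin n → R → R
  δ_add : ∀ (i : Fin n) (a b : R), δ i (a + b) = δ i a + δ i b
  δ_leibniz : ∀ (i : Fin n) (a b : R), δ i (a * b) = σ i a * δ i b + δ i a * b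
  /-- the fundamental relation `xᵢ r = σᵢ(r) xᵢ + δᵢ(r)` -/
  comm : ∀ (i : Fin n) (r : R), x i * ι r = ι (σ i r) * x i + ι (δ i r)

namespace SkewPBW

variable {R A : Type*} [Ring R] [Ring A] {n : ℕ}

/-- The standard monomial `x^α = x₁^{α₁} ⋯ xₙ^{αₙ}`. -/
def mono (S : SkewPBW R A n) (α : Fin n → ℕ) : A :=
  ((List.finRange n).map fun i => S.x i ^ α i).prod

/-- `σ^α = σ₁^{α₁} ∘ ⋯ ∘ σₙ^{αₙ}`. -/
def sigmaPow (S : SkewPBW R A n) (α : Fin n → ℕ) : R → R :=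
  iterPow (fun i => ⇑(S.σ i)) α

/-- `δ^α = δ₁^{α₁} ∘ ⋯ ∘ δₙ^{αₙ}`. -/
def deltaPow (S : SkewPBW R A n) (α : Fin n → ℕ) : R → R :=
  iterPow S.δ α

/-- `R` is `Σ`-compatible: `a σ^α(b) = 0 ↔ a b = 0`. -/
def SigmaCompatible (S : SkewPBW R A n) : Prop :=
  ∀ (a b : R) (α : Fin n → ℕ), a * S.sigmaPow α b = 0 ↔ a * b = 0

/-- `R` is `Δ`-compatible: `a b = 0 → a δ^β(b) = 0`. -/
def DeltaCompatible (S : SkewPBW R A n) : Prop :=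
  ∀ a b : R, a * b = 0 → ∀ β : Fin n → ℕ, a * S.deltaPow β b = 0

/-- `R` is `(Σ,Δ)`-compatible. -/
def SigmaDeltaCompatible (S : SkewPBW R A n) : Prop :=
  S.SigmaCompatible ∧ S.DeltaCompatible

/-- The elements `c_{i,j}` of condition (iv) are central in `R`. -/
def CCentral (S : SkewPBW R A n) : Prop :=
  ∀ (i j : Fin n) (r : R), S.c i j * r = r * S.c i j

/-- `R` is `(Σ,Δ)`-skew Armendariz with respect to `A`:
if `fg = 0` then `aᵢXᵢ · bⱼYⱼ = 0` for all coefficients/monomials of `f` and `g`. -/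
def SDSkewArmendariz (S : SkewPBW R A n) : Prop :=
  ∀ (t s : ℕ) (a : Fin (t + 1) → R) (X : Fin (t + 1) → Fin n → ℕ)
    (b : Fin (s + 1) → R) (Y : Fin (s + 1) → Fin n → ℕ),
    Function.Injective X → Function.Injective Y →
    (∑ i, S.ι (a i) * S.mono (X i)) * (∑ j, S.ι (b j) * S.mono (Y j)) = 0 →
    ∀ i j, (S.ι (a i) * S.mono (X i)) * (S.ι (b j) * S.mono (Y j)) = 0

/-- `R` is `Σ`-skew Armendariz with respect to `A`:
if `fg = 0` then `aᵢ σ^{αᵢ}(bⱼ) = 0` where `αᵢ = exp(Xᵢ)`. -/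
def SigmaSkewArmendariz (S : SkewPBW R A n) : Prop :=
  ∀ (m t : ℕ) (a : Fin (m + 1) → R) (X : Fin (m + 1) → Fin n → ℕ)
    (b : Fin (t + 1) → R) (Y : Fin (t + 1) → Fin n → ℕ),
    Function.Injective X → Function.Injective Y →
    (∑ i, S.ι (a i) * S.mono (X i)) * (∑ j, S.ι (b j) * S.mono (Y j)) = 0 →
    ∀ i j, a i * S.sigmaPow (X i) (b j) = 0

/-- `R` is skew `Π`-Armendariz with respect to `A`:
if `fg` is nilpotent in `A`, then `aᵢ bⱼ` is nilpotent in `R` for all `i, j`. -/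
def SkewPiArmendariz (S : SkewPBW R A n) : Prop :=
  ∀ (m t : ℕ) (a : Fin (m + 1) → R) (X : Fin (m + 1) → Fin n → ℕ)
    (b : Fin (t + 1) → R) (Y : Fin (t + 1) → Fin n → ℕ),
    Function.Injective X → Function.Injective Y →
    IsNilpotent ((∑ i, S.ι (a i) * S.mono (X i)) * (∑ j, S.ι (b j) * S.mono (Y j))) →
    ∀ i j, IsNilpotent (a i * b j)

end SkewPBW

/-- A ring is reversible if `a b = 0` implies `b a = 0`. -/
def IsReversible (R : Type*) [Ring R] : Prop :=
  ∀ a b : R, a * b = 0 → b * a = 0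

/-- `R` is `Σ`-rigid: `r σ^α(r) = 0` implies `r = 0`. -/
def SkewPBW.SigmaRigid {R A : Type*} [Ring R] [Ring A] {n : ℕ} (S : SkewPBW R A n) : Prop :=
  ∀ (r : R) (α : Fin n → ℕ), r * S.sigmaPow α r = 0 → r = 0

/-!
Σ-rigidity makes `R` reduced, and then `a b = 0` implies `a σ^α(b) = 0` and `a δᵢ(b) = 0`.
Hence the coefficients of `xᵅ b xᵝ` stay right-annihilated by `a`, so `a b = 0` kills the whole
product `(a xᵅ)(b xᵝ)`. Comparing the coefficients of `xᵢxⱼ` in the two relations (iv) gives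
`c_{j,i} c_{i,j} = 1`, and reduced rings are Dedekind-finite, so the `c_{i,j}` are units; by
induction on the degree, `(a xᵅ)(b xᵝ) = a σ^α(b) u x^{α+β} + (terms of lower degree)` with `u`
a unit.

Now let `fg = 0` with some `aᵢ bⱼ ≠ 0`. Among such pairs take `γ = Xᵢ + Yⱼ` maximal for the
deg-lex order, and then a pair attaining `γ` with `Xᵢ` minimal. The coefficient of `x^γ` in `fg`
is a sum of terms `a σ(b) u`; multiplying it on the right by `w = σ^{Xᵢ}(bⱼ)` kills all of them
but one by maximality of `γ`, and rigidity turns the remaining `aᵢ w u w = 0` into `aᵢ bⱼ = 0`.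
Applied to `f = g`, this shows that `A` is reduced, so a nilpotent `fg` is already zero.
-/

namespace IsReduced

variable {R : Type*} [Ring R] [IsReduced R] {a b : R}

theorem mul_eq_zero_symm (h : a * b = 0) : b * a = 0 :=
  eq_zero_of_pow_eq_zero (n := 2) <| by
    calc (b * a) ^ 2 = b * (a * b) * a := by noncomm_ring
      _ = 0 := by rw [h, mul_zero, zero_mul]

theorem mul_mul_eq_zero (h : a * b = 0) (c : R) : a * c * b = 0 :=
  eq_zero_of_pow_eq_zero (n := 2) <| by
    calc (a * c * b) ^ 2 = a * c * (b * a) * c * b := by noncomm_ring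
      _ = 0 := by rw [mul_eq_zero_symm h, mul_zero, zero_mul, zero_mul]

theorem isDedekindFiniteMonoid : IsDedekindFiniteMonoid R where
  mul_eq_one_symm {a b} h := by
    have h1 : a * (1 - b * a) = 0 := by rw [mul_sub, mul_one, ← mul_assoc, h, one_mul, sub_self]
    calc b * a = 1 - (1 - b * a) * (a * b) := by rw [h, mul_one, sub_sub_cancel]
      _ = 1 := by rw [← mul_assoc, mul_eq_zero_symm h1, zero_mul, sub_zero]

theorem mul_eq_zero_of_mul_mul_mul_eq_zero {u : R} (hu : IsUnit u) (h : a * b * u * b = 0) :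
    a * b = 0 := by
  have hba : b * (a * b) = 0 := by
    rw [← hu.mul_left_eq_zero, mul_assoc]
    exact mul_eq_zero_symm h
  exact eq_zero_of_pow_eq_zero (n := 2) (by rw [sq, mul_assoc, hba, mul_zero])

end IsReduced

theorem mul_map_eq_zero_iff_of_rigid {R : Type*} [Ring R] [IsReduced R] {σ : R →+* R}
    (hσ : ∀ r, r * σ r = 0 → r = 0) {a b : R} : a * σ b = 0 ↔ a * b = 0 := by
  constructor
  · intro h
    refine IsReduced.mul_eq_zero_symm (hσ _ ?_)
    calc b * a * σ (b * a) = b * (a * σ b) * σ a := by rw [map_mul]; noncomm_ring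
      _ = 0 := by rw [h, mul_zero, zero_mul]
  · intro h
    refine hσ _ ?_
    calc a * σ b * σ (a * σ b) = a * σ (b * a) * σ (σ b) := by simp only [map_mul]; noncomm_ring
      _ = 0 := by rw [IsReduced.mul_eq_zero_symm h, map_zero, mul_zero, zero_mul]

theorem List.mul_prod_map_pow_of_sorted {ι M : Type*} [LinearOrder ι] [Monoid M] (m : ι → M)
    {l : List ι} (hl : l.Pairwise (· < ·)) {i : ι} (hi : i ∈ l) {γ : ι → ℕ}
    (hγ : ∀ j < i, γ j = 0) :
    m i * (l.map fun j => m j ^ γ j).prod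
      = (l.map fun j => m j ^ (γ + Pi.single i 1 : ι → ℕ) j).prod := by
  induction l with
  | nil => simp at hi
  | cons k l ih =>
    obtain ⟨hk, hl⟩ := List.pairwise_cons.mp hl
    simp only [List.map_cons, List.prod_cons, Pi.add_apply]
    rcases List.mem_cons.mp hi with rfl | hi
    · have htail : l.map (fun j => m j ^ (γ j + (Pi.single i 1 : ι → ℕ) j))
          = l.map (fun j => m j ^ γ j) :=
        List.map_congr_left fun j hj => by rw [Pi.single_eq_of_ne (hk j hj).ne', add_zero]
      rw [htail, Pi.single_eq_same, pow_succ', mul_assoc]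
    · have hki : k < i := hk i hi
      have := ih hl hi
      simp only [Pi.add_apply] at this
      rw [← this, hγ k hki, Pi.single_eq_of_ne hki.ne, add_zero, pow_zero, one_mul, one_mul]

theorem Function.End.pow_eq_iterate {α : Type*} (g : Function.End α) (m : ℕ) : g ^ m = g^[m] := by
  induction m with
  | zero => rfl
  | succ m ih => rw [pow_succ, ih]; exact (Function.iterate_succ g m).symm

section IterPow

variable {α : Type*} {n : ℕ}

theorem iterPow_eq_prod (f : Fin n → Function.End α) (k : Fin n → ℕ) :
    iterPow f k = ((List.finRange n).map fun j => f j ^ k j).prod := by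
  unfold iterPow
  induction List.finRange n with
  | nil => rfl
  | cons i l ih =>
    simp only [List.map_cons, List.foldr_cons, ih, Function.End.pow_eq_iterate]
    rfl

variable (f : Fin n → α → α)

theorem iterPow_zero : iterPow f 0 = id :=
  (iterPow_eq_prod f 0).trans <| List.prod_eq_one (M := Function.End α) fun g hg => by
    obtain ⟨j, -, rfl⟩ := List.mem_map.1 hg
    exact pow_zero _

theorem iterPow_add_single {k : Fin n → ℕ} {i : Fin n} (h : ∀ j < i, k j = 0) :
    iterPow f (k + Pi.single i 1) = f i ∘ iterPow f k :=
  (iterPow_eq_prod f _).trans <| (List.mul_prod_map_pow_of_sorted (M := Function.End α) f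
    (List.pairwise_lt_finRange n) (List.mem_finRange i) h).symm.trans <|
    congrArg (f i ∘ ·) (iterPow_eq_prod f k).symm

end IterPow

namespace SkewPBW

section Exponents

variable {n : ℕ}

def deg (α : Fin n → ℕ) : ℕ := ∑ i, α i

@[simp] theorem deg_zero : deg (0 : Fin n → ℕ) = 0 := by simp [deg]

theorem deg_add (α β : Fin n → ℕ) : deg (α + β) = deg α + deg β := Finset.sum_add_distrib

@[simp] theorem deg_single (i : Fin n) : deg (Pi.single i 1 : Fin n → ℕ) = 1 := by simp [deg]

def degLex (α : Fin n → ℕ) : ℕ ×ₗ Lex (Fin n → ℕ) := toLex (deg α, toLex α)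

theorem degLex_injective : Function.Injective (degLex (n := n)) := fun _ _ h =>
  congrArg (fun p : ℕ ×ₗ Lex (Fin n → ℕ) => ofLex (ofLex p).2) h

theorem degLex_add (α β : Fin n → ℕ) : degLex (α + β) = degLex α + degLex β := by
  rw [degLex, deg_add]
  rfl

theorem deg_le_of_degLex_le {α β : Fin n → ℕ} (h : degLex α ≤ degLex β) : deg α ≤ deg β := by
  rcases Prod.Lex.toLex_le_toLex.mp h with h | ⟨h, -⟩
  exacts [h.le, h.le]

theorem exists_eq_add_single {α : Fin n → ℕ} (h : α ≠ 0) :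
    ∃ (i : Fin n) (α' : Fin n → ℕ), (∀ j < i, α' j = 0) ∧ α = α' + Pi.single i 1 := by
  classical
  have hs : (Finset.univ.filter fun j => α j ≠ 0).Nonempty := by
    obtain ⟨j, hj⟩ := Function.ne_iff.mp h
    exact ⟨j, by simpa using hj⟩
  set i := (Finset.univ.filter fun j => α j ≠ 0).min' hs
  have hi : α i ≠ 0 := (Finset.mem_filter.mp (Finset.min'_mem _ hs)).2
  have hlt : ∀ j < i, α j = 0 := fun j hj => by
    by_contra hne
    exact absurd (Finset.min'_le _ j (by simpa using hne)) (not_le.mpr hj)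
  refine ⟨i, α - Pi.single i 1, fun j hj => by simp [hlt j hj], funext fun j => ?_⟩
  by_cases hj : j = i
  · subst hj
    simp only [Pi.add_apply, Pi.sub_apply, Pi.single_eq_same]
    omega
  · simp [Pi.single_eq_of_ne hj]

theorem induction_add_single {P : (Fin n → ℕ) → Prop} (zero : P 0)
    (add_single : ∀ i α, (∀ j < i, α j = 0) → P α → P (α + Pi.single i 1))
    (α : Fin n → ℕ) : P α := by
  induction h : deg α using Nat.strong_induction_on generalizing α with
  | _ d ih =>
    by_cases hα : α = 0
    · exact hα ▸ zero
    obtain ⟨i, α', hα', rfl⟩ := exists_eq_add_single hα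
    exact add_single i α' hα' (ih (deg α') (by rw [← h, deg_add, deg_single]; omega) α' rfl)

end Exponents

variable {R A : Type*} [Ring R] [Ring A] {n : ℕ} (S : SkewPBW R A n)

theorem mono_zero : S.mono 0 = 1 :=
  List.prod_eq_one fun y hy => by
    obtain ⟨i, -, rfl⟩ := List.mem_map.1 hy
    exact pow_zero _

theorem x_mul_mono {i : Fin n} {α : Fin n → ℕ} (h : ∀ j < i, α j = 0) :
    S.x i * S.mono α = S.mono (α + Pi.single i 1) :=
  List.mul_prod_map_pow_of_sorted S.x (List.pairwise_lt_finRange n) (List.mem_finRange i) h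

theorem mono_single (i : Fin n) : S.mono (Pi.single i 1) = S.x i := by
  simpa [mono_zero] using (S.x_mul_mono (α := 0) (i := i) fun _ _ => rfl).symm

theorem sigmaPow_zero : S.sigmaPow 0 = id := iterPow_zero _

theorem sigmaPow_add_single {i : Fin n} {α : Fin n → ℕ} (h : ∀ j < i, α j = 0) :
    S.sigmaPow (α + Pi.single i 1) = S.σ i ∘ S.sigmaPow α :=
  iterPow_add_single _ h

theorem δ_zero (i : Fin n) : S.δ i 0 = 0 := by
  simpa using S.δ_add i 0 0

noncomputable def repr : A ≃+ ((Fin n → ℕ) →₀ R) :=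
  AddEquiv.symm
    { Equiv.ofBijective _ S.free with
      map_add' := fun c d => Finsupp.sum_add_index' (f := c) (g := d)
        (h := fun α r => S.ι r * S.mono α) (fun _ => by simp) fun _ _ _ => by
          rw [map_add, add_mul] }

theorem repr_symm_apply (c : (Fin n → ℕ) →₀ R) :
    S.repr.symm c = c.sum fun α r => S.ι r * S.mono α := rfl

theorem sum_repr (z : A) : (S.repr z).sum (fun α r => S.ι r * S.mono α) = z :=
  S.repr.symm_apply_apply z

theorem repr_ι_mul_mono (r : R) (α : Fin n → ℕ) :
    S.repr (S.ι r * S.mono α) = Finsupp.single α r := by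
  rw [← S.repr.apply_symm_apply (Finsupp.single α r), repr_symm_apply,
    Finsupp.sum_single_index (by rw [map_zero, zero_mul])]

theorem repr_mono (α : Fin n → ℕ) : S.repr (S.mono α) = Finsupp.single α 1 := by
  simpa using S.repr_ι_mul_mono 1 α

theorem repr_ι_mul (r : R) (z : A) (γ : Fin n → ℕ) :
    S.repr (S.ι r * z) γ = r * S.repr z γ := by
  have : S.ι r * z = S.repr.symm ((S.repr z).mapRange (r * ·) (mul_zero r)) := by
    conv_lhs => rw [← S.sum_repr z]
    rw [repr_symm_apply, Finsupp.mul_sum, Finsupp.sum_mapRange_index (by simp)]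
    simp only [← mul_assoc, ← map_mul]
  rw [this, AddEquiv.apply_symm_apply, Finsupp.mapRange_apply]

def degLT (d : ℕ) : AddSubgroup A where
  carrier := {z | ∀ γ, d ≤ deg γ → S.repr z γ = 0}
  add_mem' hy hz γ hγ := by rw [map_add, Finsupp.add_apply, hy γ hγ, hz γ hγ, add_zero]
  zero_mem' _ _ := by rw [map_zero, Finsupp.zero_apply]
  neg_mem' hz γ hγ := by rw [map_neg, Finsupp.neg_apply, hz γ hγ, neg_zero]

def coeffAnnihilatedBy (a : R) : AddSubgroup A where
  carrier := {z | ∀ γ, a * S.repr z γ = 0}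
  add_mem' hy hz γ := by rw [map_add, Finsupp.add_apply, mul_add, hy γ, hz γ, add_zero]
  zero_mem' _ := by rw [map_zero, Finsupp.zero_apply, mul_zero]
  neg_mem' hz γ := by rw [map_neg, Finsupp.neg_apply, mul_neg, hz γ, neg_zero]

section DegreeFiltration

variable {S}

theorem degLT_mono : Monotone S.degLT := fun _ _ h _ hz γ hγ => hz γ (h.trans hγ)

theorem ι_mul_mono_mem_degLT (r : R) {γ : Fin n → ℕ} {d : ℕ} (h : deg γ < d) :
    S.ι r * S.mono γ ∈ S.degLT d := fun γ' hγ' => by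
  rw [repr_ι_mul_mono, Finsupp.single_eq_of_ne]
  rintro rfl
  omega

theorem mono_mem_degLT {γ : Fin n → ℕ} {d : ℕ} (h : deg γ < d) : S.mono γ ∈ S.degLT d := by
  simpa using ι_mul_mono_mem_degLT (S := S) 1 h

theorem ι_mul_mem_degLT (r : R) {d : ℕ} {z : A} (hz : z ∈ S.degLT d) :
    S.ι r * z ∈ S.degLT d := fun γ hγ => by
  rw [repr_ι_mul, hz γ hγ, mul_zero]

theorem map_mem_of_mem_degLT (F : A →+ A) {T : AddSubgroup A} {d : ℕ}
    (hF : ∀ r γ, deg γ < d → F (S.ι r * S.mono γ) ∈ T) {z : A} (hz : z ∈ S.degLT d) :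
    F z ∈ T := by
  rw [← S.sum_repr z, map_finsuppSum]
  exact sum_mem fun γ hγ => hF _ γ (not_le.mp fun h => Finsupp.mem_support_iff.mp hγ (hz γ h))

theorem linear_mem_degLT_two (r₀ : R) (r : Fin n → R) :
    S.ι r₀ + ∑ k, S.ι (r k) * S.x k ∈ S.degLT 2 := by
  refine add_mem ?_ (sum_mem fun k _ => ?_)
  · simpa [mono_zero] using ι_mul_mono_mem_degLT (S := S) r₀ (γ := 0) (by simp)
  · rw [← S.mono_single k]
    exact ι_mul_mono_mem_degLT _ (by simp)

end DegreeFiltration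

theorem c_mul_c_of_lt {i j : Fin n} (hij : i < j) : S.c j i * S.c i j = 1 := by
  obtain ⟨r₀, r, hji⟩ := S.quad i j
  obtain ⟨s₀, s, hij'⟩ := S.quad j i
  set ε : Fin n → ℕ := Pi.single j 1 + Pi.single i 1
  have hε : S.x i * S.x j = S.mono ε := by
    rw [← S.mono_single j, S.x_mul_mono fun k hk => Pi.single_eq_of_ne (hk.trans hij).ne 1]
  have hmem : S.mono ε - S.ι (S.c j i * S.c i j) * S.mono ε
      = (S.ι s₀ + ∑ k, S.ι (s k) * S.x k)
        + S.ι (S.c j i) * (S.ι r₀ + ∑ k, S.ι (r k) * S.x k) := by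
    rw [← hε, ← hij', ← hji, map_mul]
    noncomm_ring
  have hcoeff := congrArg (fun z => S.repr z ε) hmem
  simp only [map_sub, Finsupp.sub_apply, repr_mono, repr_ι_mul, Finsupp.single_eq_same,
    mul_one] at hcoeff
  rw [(add_mem (linear_mem_degLT_two s₀ s) (ι_mul_mem_degLT _ (linear_mem_degLT_two r₀ r))) ε
    (by simp [ε, deg_add])] at hcoeff
  exact (sub_eq_zero.mp hcoeff).symm

theorem isUnit_c_of_lt [IsDedekindFiniteMonoid R] {i j : Fin n} (hij : i < j) :
    IsUnit (S.c i j) :=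
  IsUnit.of_mul_eq_one_right _ (S.c_mul_c_of_lt hij)

theorem x_mul_mono_add_single_sub_eq {i i₀ : Fin n} (hi₀ : i₀ < i) {α : Fin n → ℕ}
    (hα : ∀ j < i₀, α j = 0) {c u : R} {L : A}
    (hq : S.x i * S.x i₀ = S.ι c * (S.x i₀ * S.x i) + L) :
    S.x i * S.mono (α + Pi.single i₀ 1)
        - S.ι (c * S.σ i₀ u) * S.mono (α + Pi.single i₀ 1 + Pi.single i 1)
      = S.ι c * (S.ι (S.δ i₀ u) * S.mono (α + Pi.single i 1)
          + S.x i₀ * (S.x i * S.mono α - S.ι u * S.mono (α + Pi.single i 1)))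
        + L * S.mono α := by
  have hmono : S.x i₀ * S.mono (α + Pi.single i 1)
      = S.mono (α + Pi.single i₀ 1 + Pi.single i 1) := by
    rw [S.x_mul_mono fun k hk => by simp [hα k hk, Pi.single_eq_of_ne (hk.trans hi₀).ne],
      add_right_comm]
  rw [← S.x_mul_mono hα, ← mul_assoc, hq, ← hmono, mul_sub, ← mul_assoc (S.x i₀) (S.ι u),
    S.comm, map_mul]
  noncomm_ring

/-- The induction invariant behind `xᵢ xᵅ = u x^{α+eᵢ} + (lower terms)`: it must hold for all `i`
at once, because moving `xᵢ` past a smaller variable produces every `x_k xᵅ'` of lower degree. -/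
def ExpandsBelow (d : ℕ) : Prop :=
  ∀ (i : Fin n) (α : Fin n → ℕ), deg α < d → ∃ u : R, IsUnit u ∧
    S.x i * S.mono α - S.ι u * S.mono (α + Pi.single i 1) ∈ S.degLT (deg α + 1)

namespace ExpandsBelow

variable {S} {d : ℕ} (h : S.ExpandsBelow d)
include h

theorem x_mul_mem_degLT (i : Fin n) {z : A} (hz : z ∈ S.degLT d) :
    S.x i * z ∈ S.degLT (d + 1) := by
  refine map_mem_of_mem_degLT (AddMonoidHom.mulLeft (S.x i)) (fun r γ hγ => ?_) hz
  obtain ⟨u, -, hu⟩ := h i γ hγ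
  have hx : S.x i * S.mono γ ∈ S.degLT (d + 1) := by
    have := add_mem (degLT_mono (by omega) hu)
      (ι_mul_mono_mem_degLT (S := S) u (γ := γ + Pi.single i 1) (d := d + 1)
        (by rw [deg_add, deg_single]; omega))
    rwa [sub_add_cancel] at this
  change S.x i * (S.ι r * S.mono γ) ∈ _
  rw [← mul_assoc, S.comm, add_mul, mul_assoc]
  exact add_mem (ι_mul_mem_degLT _ hx) (ι_mul_mono_mem_degLT _ (by omega))

theorem linear_mul_mem_degLT (r₀ : R) (r : Fin n → R) {z : A} (hz : z ∈ S.degLT d) :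
    (S.ι r₀ + ∑ k, S.ι (r k) * S.x k) * z ∈ S.degLT (d + 1) := by
  rw [add_mul, Finset.sum_mul]
  refine add_mem (degLT_mono (Nat.le_succ d) (ι_mul_mem_degLT _ hz)) (sum_mem fun k _ => ?_)
  rw [mul_assoc]
  exact ι_mul_mem_degLT _ (h.x_mul_mem_degLT k hz)

theorem succ [IsDedekindFiniteMonoid R] : S.ExpandsBelow (d + 1) := by
  intro i α hα
  rcases Nat.lt_succ_iff_lt_or_eq.mp hα with hα | hdeg
  · exact h i α hα
  by_cases hlow : ∀ j < i, α j = 0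
  · exact ⟨1, isUnit_one, by rw [S.x_mul_mono hlow, map_one, one_mul, sub_self]; exact zero_mem _⟩
  simp only [not_forall] at hlow
  obtain ⟨j, hji, hj⟩ := hlow
  obtain ⟨i₀, α', hα', rfl⟩ := exists_eq_add_single (α := α) (by rintro rfl; exact hj rfl)
  have hi₀ : i₀ < i := by
    refine lt_of_le_of_lt (not_lt.mp fun hj₀ => hj ?_) hji
    simp [hα' j hj₀, Pi.single_eq_of_ne hj₀.ne]
  rw [deg_add, deg_single] at hdeg ⊢
  subst hdeg
  obtain ⟨u, hu, hE⟩ := h i α' (by omega)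
  obtain ⟨r₀, r, hq⟩ := S.quad i₀ i
  refine ⟨S.c i₀ i * S.σ i₀ u, (S.isUnit_c_of_lt hi₀).mul (hu.map (S.σ i₀)), ?_⟩
  rw [S.x_mul_mono_add_single_sub_eq hi₀ hα' (eq_add_of_sub_eq' hq)]
  refine add_mem (ι_mul_mem_degLT _ (add_mem (ι_mul_mono_mem_degLT _ ?_) ?_)) ?_
  · rw [deg_add, deg_single]
    omega
  · exact h.x_mul_mem_degLT i₀ hE
  · exact h.linear_mul_mem_degLT r₀ r (mono_mem_degLT (by omega))

end ExpandsBelow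

section Expansion

variable [IsDedekindFiniteMonoid R]

theorem expandsBelow (d : ℕ) : S.ExpandsBelow d := by
  induction d with
  | zero => exact fun _ _ h => absurd h (Nat.not_lt_zero _)
  | succ d ih => exact ih.succ

theorem exists_x_mul_mono_sub_mem (i : Fin n) (α : Fin n → ℕ) :
    ∃ u : R, IsUnit u ∧
      S.x i * S.mono α - S.ι u * S.mono (α + Pi.single i 1) ∈ S.degLT (deg α + 1) :=
  S.expandsBelow (deg α + 1) i α (lt_add_one _)

variable {S} in
theorem x_mul_mem_degLT (i : Fin n) {d : ℕ} {z : A} (hz : z ∈ S.degLT d) :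
    S.x i * z ∈ S.degLT (d + 1) :=
  (S.expandsBelow d).x_mul_mem_degLT i hz

theorem mono_mul_ι_sub_mem (α : Fin n → ℕ) (r : R) :
    S.mono α * S.ι r - S.ι (S.sigmaPow α r) * S.mono α ∈ S.degLT (deg α) := by
  induction α using induction_add_single with
  | zero =>
    rw [S.mono_zero, S.sigmaPow_zero, one_mul, mul_one, id, sub_self]
    exact zero_mem _
  | add_single i α hα ih =>
    have key : S.mono (α + Pi.single i 1) * S.ι r
          - S.ι (S.sigmaPow (α + Pi.single i 1) r) * S.mono (α + Pi.single i 1)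
        = S.ι (S.δ i (S.sigmaPow α r)) * S.mono α
          + S.x i * (S.mono α * S.ι r - S.ι (S.sigmaPow α r) * S.mono α) := by
      rw [← S.x_mul_mono hα, S.sigmaPow_add_single hα, Function.comp_apply, mul_sub,
        ← mul_assoc (S.x i) (S.ι _), S.comm]
      noncomm_ring
    rw [key, deg_add, deg_single]
    exact add_mem (ι_mul_mono_mem_degLT _ (by omega)) (x_mul_mem_degLT i ih)

theorem exists_mono_mul_mono_sub_mem (α β : Fin n → ℕ) :
    ∃ u : R, IsUnit u ∧
      S.mono α * S.mono β - S.ι u * S.mono (α + β) ∈ S.degLT (deg α + deg β) := by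
  induction α using induction_add_single with
  | zero =>
    refine ⟨1, isUnit_one, ?_⟩
    rw [S.mono_zero, map_one, one_mul, one_mul, zero_add, sub_self]
    exact zero_mem _
  | add_single i α hα ih =>
    obtain ⟨u, hu, hE⟩ := ih
    obtain ⟨v, hv, hF⟩ := S.exists_x_mul_mono_sub_mem i (α + β)
    refine ⟨S.σ i u * v, (hu.map (S.σ i)).mul hv, ?_⟩
    have key : S.mono (α + Pi.single i 1) * S.mono β
          - S.ι (S.σ i u * v) * S.mono (α + Pi.single i 1 + β)
        = S.x i * (S.mono α * S.mono β - S.ι u * S.mono (α + β))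
          + S.ι (S.δ i u) * S.mono (α + β)
          + S.ι (S.σ i u) * (S.x i * S.mono (α + β) - S.ι v * S.mono (α + β + Pi.single i 1)) := by
      rw [← S.x_mul_mono hα, add_right_comm, mul_sub, ← mul_assoc (S.x i) (S.ι u), S.comm,
        map_mul]
      noncomm_ring
    rw [key, deg_add, deg_single, add_right_comm]
    refine add_mem (add_mem (x_mul_mem_degLT i hE) (ι_mul_mono_mem_degLT _ ?_))
      (ι_mul_mem_degLT _ (by rwa [deg_add] at hF))
    rw [deg_add]
    omega

variable {S} in
theorem mul_mono_mem_degLT {d : ℕ} {z : A} (hz : z ∈ S.degLT d) (β : Fin n → ℕ) :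
    z * S.mono β ∈ S.degLT (d + deg β) := by
  refine map_mem_of_mem_degLT (AddMonoidHom.mulRight (S.mono β)) (fun r γ hγ => ?_) hz
  obtain ⟨u, -, hE⟩ := S.exists_mono_mul_mono_sub_mem γ β
  have key : S.ι r * S.mono γ * S.mono β
      = S.ι (r * u) * S.mono (γ + β)
        + S.ι r * (S.mono γ * S.mono β - S.ι u * S.mono (γ + β)) := by
    rw [map_mul]
    noncomm_ring
  change S.ι r * S.mono γ * S.mono β ∈ _
  rw [key]
  refine add_mem (ι_mul_mono_mem_degLT _ ?_) (ι_mul_mem_degLT _ (degLT_mono ?_ hE))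
  · rw [deg_add]
    omega
  · omega

theorem exists_repr_term_mul_term (α β : Fin n → ℕ) :
    ∃ u : R, IsUnit u ∧ ∀ (a b : R) (γ : Fin n → ℕ), deg (α + β) ≤ deg γ →
      S.repr ((S.ι a * S.mono α) * (S.ι b * S.mono β)) γ
        = Finsupp.single (α + β) (a * S.sigmaPow α b * u) γ := by
  obtain ⟨u, hu, hE⟩ := S.exists_mono_mul_mono_sub_mem α β
  refine ⟨u, hu, fun a b γ hγ => ?_⟩
  have key : (S.ι a * S.mono α) * (S.ι b * S.mono β)
        - S.ι (a * S.sigmaPow α b * u) * S.mono (α + β)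
      = S.ι (a * S.sigmaPow α b) * (S.mono α * S.mono β - S.ι u * S.mono (α + β))
        + S.ι a * ((S.mono α * S.ι b - S.ι (S.sigmaPow α b) * S.mono α) * S.mono β) := by
    simp only [map_mul]
    noncomm_ring
  have hmem : (S.ι a * S.mono α) * (S.ι b * S.mono β)
      - S.ι (a * S.sigmaPow α b * u) * S.mono (α + β) ∈ S.degLT (deg (α + β)) := by
    rw [key, deg_add]
    exact add_mem (ι_mul_mem_degLT _ hE)
      (ι_mul_mem_degLT _ (mul_mono_mem_degLT (S.mono_mul_ι_sub_mem α b) β))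
  rw [← S.repr_ι_mul_mono, ← sub_eq_zero, ← Finsupp.sub_apply, ← map_sub]
  exact hmem γ hγ

end Expansion

variable {S}

theorem ι_mul_mem_coeffAnnihilatedBy {a c : R} (h : a * c = 0) (y : A) :
    S.ι c * y ∈ S.coeffAnnihilatedBy a := fun γ => by
  rw [repr_ι_mul, ← mul_assoc, h, zero_mul]

theorem ι_mul_eq_zero_of_mem_coeffAnnihilatedBy {a : R} {z : A}
    (hz : z ∈ S.coeffAnnihilatedBy a) : S.ι a * z = 0 :=
  S.repr.map_eq_zero_iff.mp (Finsupp.ext fun γ => by rw [repr_ι_mul, hz γ, Finsupp.zero_apply])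

namespace SigmaRigid

variable (hS : S.SigmaRigid)
include hS

theorem isReduced : IsReduced R :=
  (isReduced_iff_pow_one_lt 2 one_lt_two).2 fun r hr =>
    hS r 0 (by rwa [S.sigmaPow_zero, id, ← sq])

theorem eq_zero_of_mul_σ_self_eq_zero (i : Fin n) {r : R} (hr : r * S.σ i r = 0) : r = 0 := by
  have hσ := S.sigmaPow_add_single (α := 0) (i := i) fun _ _ => rfl
  rw [zero_add, S.sigmaPow_zero, Function.comp_id] at hσ
  exact hS r _ (by rwa [hσ])

theorem mul_sigmaPow_eq_zero_iff {a b : R} (α : Fin n → ℕ) :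
    a * S.sigmaPow α b = 0 ↔ a * b = 0 := by
  have := hS.isReduced
  induction α using induction_add_single with
  | zero => rw [S.sigmaPow_zero, id]
  | add_single i α hα ih =>
    rw [S.sigmaPow_add_single hα, Function.comp_apply]
    exact (mul_map_eq_zero_iff_of_rigid fun _ => hS.eq_zero_of_mul_σ_self_eq_zero i).trans ih

theorem mul_δ_eq_zero (i : Fin n) {a b : R} (h : a * b = 0) : a * S.δ i b = 0 := by
  have := hS.isReduced
  have hleib : S.σ i a * S.δ i b + S.δ i a * b = 0 := by rw [← S.δ_leibniz, h, S.δ_zero]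
  have h₁ : S.σ i a * (S.δ i b * a) = 0 := by
    calc S.σ i a * (S.δ i b * a)
        = (S.σ i a * S.δ i b + S.δ i a * b) * a - S.δ i a * (b * a) := by noncomm_ring
      _ = 0 := by rw [hleib, IsReduced.mul_eq_zero_symm h, zero_mul, mul_zero, sub_zero]
  have h₂ : a * (S.δ i b * a) = 0 := IsReduced.mul_eq_zero_symm <|
    (mul_map_eq_zero_iff_of_rigid fun _ => hS.eq_zero_of_mul_σ_self_eq_zero i).1
      (IsReduced.mul_eq_zero_symm h₁)
  refine eq_zero_of_pow_eq_zero (n := 2) ?_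
  calc (a * S.δ i b) ^ 2 = a * (S.δ i b * a) * S.δ i b := by noncomm_ring
    _ = 0 := by rw [h₂, zero_mul]

theorem x_mul_mem_coeffAnnihilatedBy (i : Fin n) {a : R} {z : A}
    (hz : z ∈ S.coeffAnnihilatedBy a) : S.x i * z ∈ S.coeffAnnihilatedBy a := by
  have := hS.isReduced
  rw [← S.sum_repr z, Finsupp.mul_sum]
  refine sum_mem fun γ _ => ?_
  dsimp only
  rw [← mul_assoc, S.comm, add_mul, mul_assoc]
  exact add_mem
    (ι_mul_mem_coeffAnnihilatedBy
      ((mul_map_eq_zero_iff_of_rigid fun _ => hS.eq_zero_of_mul_σ_self_eq_zero i).2 (hz γ)) _)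
    (ι_mul_mem_coeffAnnihilatedBy (hS.mul_δ_eq_zero i (hz γ)) _)

theorem mono_mul_mem_coeffAnnihilatedBy (α : Fin n → ℕ) {a : R} {z : A}
    (hz : z ∈ S.coeffAnnihilatedBy a) : S.mono α * z ∈ S.coeffAnnihilatedBy a := by
  induction α using induction_add_single with
  | zero => rwa [S.mono_zero, one_mul]
  | add_single i α hα ih =>
    rw [← S.x_mul_mono hα, mul_assoc]
    exact hS.x_mul_mem_coeffAnnihilatedBy i ih

theorem term_mul_term_eq_zero {a b : R} (h : a * b = 0) (α β : Fin n → ℕ) :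
    (S.ι a * S.mono α) * (S.ι b * S.mono β) = 0 := by
  rw [mul_assoc]
  exact ι_mul_eq_zero_of_mem_coeffAnnihilatedBy
    (hS.mono_mul_mem_coeffAnnihilatedBy α (ι_mul_mem_coeffAnnihilatedBy h _))

theorem exists_repr_sum_mul_sum {I J : Type*} [Fintype I] [Fintype J]
    [DecidableEq R] [DecidableEq (Fin n → ℕ)] (a : I → R) (X : I → Fin n → ℕ) (b : J → R) (Y : J → Fin n → ℕ) {γ : Fin n → ℕ}
    (hγ : ∀ p : I × J, a p.1 * b p.2 ≠ 0 → degLex (X p.1 + Y p.2) ≤ degLex γ) :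
    ∃ u : I × J → R, (∀ p, IsUnit (u p)) ∧
      S.repr ((∑ i, S.ι (a i) * S.mono (X i)) * (∑ j, S.ι (b j) * S.mono (Y j))) γ
        = ∑ p ∈ Finset.univ.filter (fun p : I × J => a p.1 * b p.2 ≠ 0 ∧ X p.1 + Y p.2 = γ),
            a p.1 * S.sigmaPow (X p.1) (b p.2) * u p := by
  have := hS.isReduced
  have := IsReduced.isDedekindFiniteMonoid (R := R)
  choose u hu hrepr using fun p : I × J => S.exists_repr_term_mul_term (X p.1) (Y p.2)
  refine ⟨u, hu, ?_⟩
  rw [Finset.sum_mul_sum, ← Fintype.sum_prod_type', map_sum, Finsupp.finsetSum_apply,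
    Finset.sum_filter]
  refine Finset.sum_congr rfl fun p _ => ?_
  by_cases hp : a p.1 * b p.2 = 0
  · rw [hS.term_mul_term_eq_zero hp, map_zero, Finsupp.zero_apply, if_neg fun hp' => hp'.1 hp]
  · rw [hrepr p _ _ γ (deg_le_of_degLex_le (hγ p hp)), Finsupp.single_apply]
    simp only [ne_eq, hp, not_false_eq_true, true_and]

theorem mul_eq_zero_of_sum_mul_sum_eq_zero {I J : Type*} [Fintype I] [Fintype J]
    {a : I → R} {X : I → Fin n → ℕ} {b : J → R} {Y : J → Fin n → ℕ}
    (hX : Function.Injective X) (hY : Function.Injective Y)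
    (h : (∑ i, S.ι (a i) * S.mono (X i)) * (∑ j, S.ι (b j) * S.mono (Y j)) = 0) (i : I) (j : J) :
    a i * b j = 0 := by
  classical
  have := hS.isReduced
  by_contra hij
  set Q := Finset.univ.filter fun p : I × J => a p.1 * b p.2 ≠ 0
  obtain ⟨q, hq, hqmax⟩ :=
    Q.exists_max_image (fun p => degLex (X p.1 + Y p.2)) ⟨(i, j), by simpa [Q] using hij⟩
  set P := Finset.univ.filter fun p : I × J => a p.1 * b p.2 ≠ 0 ∧ X p.1 + Y p.2 = X q.1 + Y q.2
  obtain ⟨p, hp, hpmin⟩ := P.exists_min_image (fun p => degLex (X p.1))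
    ⟨q, by simpa [P, Q] using hq⟩
  simp only [P, Finset.mem_filter, Finset.mem_univ, true_and] at hp hpmin
  obtain ⟨u, hu, hrepr⟩ := hS.exists_repr_sum_mul_sum a X b Y fun p' hp' =>
    hqmax p' (by simpa [Q] using hp')
  rw [h, map_zero, Finsupp.zero_apply] at hrepr
  -- Every other pair attaining the maximum is killed by `w` on the right, by minimality of `X p.1`.
  set w := S.sigmaPow (X p.1) (b p.2)
  have hkill (p' : I × J) (hp' : p' ∈ P) (hne : p' ≠ p) : a p'.1 * w = 0 := by
    simp only [P, Finset.mem_filter, Finset.mem_univ, true_and] at hp'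
    have hX' : degLex (X p.1) < degLex (X p'.1) := by
      refine lt_of_le_of_ne (hpmin p' hp') fun hXeq => hne ?_
      have h1 : p'.1 = p.1 := hX (degLex_injective hXeq).symm
      exact Prod.ext h1 (hY (add_left_cancel (hp'.2.trans (h1 ▸ hp.2.symm))))
    have hnotQ : (p'.1, p.2) ∉ Q := fun hmem => (hqmax _ hmem).not_gt <| by
      rw [← hp.2, degLex_add, degLex_add]
      exact add_lt_add_of_lt_of_le hX' le_rfl
    exact (hS.mul_sigmaPow_eq_zero_iff _).2 (by simpa [Q] using hnotQ)
  have hlead : a p.1 * w * u p * w = 0 := by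
    have h1 := congrArg (· * w) hrepr
    simp only [Finset.sum_mul, zero_mul] at h1
    rwa [Finset.sum_eq_single_of_mem p (by simpa [P] using hp) fun p' hp' hne => by
      rw [mul_assoc (a p'.1)]
      exact IsReduced.mul_mul_eq_zero (hkill p' hp' hne) _, eq_comm] at h1
  exact hp.1 <| (hS.mul_sigmaPow_eq_zero_iff _).1 <|
    IsReduced.mul_eq_zero_of_mul_mul_mul_eq_zero (hu p) hlead

theorem isReduced_extension : IsReduced A := by
  have := hS.isReduced
  refine (isReduced_iff_pow_one_lt 2 one_lt_two).2 fun z hz => ?_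
  have hsum : z = ∑ γ : (S.repr z).support, S.ι (S.repr z γ) * S.mono γ := by
    rw [Finset.sum_coe_sort (S.repr z).support fun γ => S.ι (S.repr z γ) * S.mono γ]
    exact (S.sum_repr z).symm
  have hzero := hS.mul_eq_zero_of_sum_mul_sum_eq_zero Subtype.val_injective
    Subtype.val_injective (hsum ▸ sq z ▸ hz)
  refine S.repr.map_eq_zero_iff.mp (Finsupp.ext fun γ => ?_)
  by_contra hγ
  exact hγ (eq_zero_of_pow_eq_zero (n := 2)
    (by rw [sq]; exact hzero ⟨γ, Finsupp.mem_support_iff.2 hγ⟩ ⟨γ, Finsupp.mem_support_iff.2 hγ⟩))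

end SigmaRigid

end SkewPBW

theorem sigmaRigid_skewPiArmendariz_general {R A : Type*} [Ring R] [Ring A] {n : ℕ}
    (S : SkewPBW R A n) (hrigid : S.SigmaRigid) :
    S.SkewPiArmendariz := by
  intro m t a X b Y hX hY hnil i j
  have := hrigid.isReduced_extension
  rw [hrigid.mul_eq_zero_of_sum_mul_sum_eq_zero hX hY hnil.eq_zero i j]
  exact IsNilpotent.zero

/-- Let `A` be a skew PBW extension of `R` with the constants
`c_{i,j}` of condition (iv) central in `R`.  If `R` is `Σ`-rigid, then `R` is
skew `Π`-Armendariz with respect to `A`. -/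
theorem sigmaRigid_skewPiArmendariz {R A : Type*} [Ring R] [Ring A] {n : ℕ}
    (S : SkewPBW R A n) (hc : S.CCentral) (hrigid : S.SigmaRigid) :
    S.SkewPiArmendariz :=
  sigmaRigid_skewPiArmendariz_general S hrigid
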